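/- Let F_s = k_s(t), F = K(t) with K = ∏_{s∈S} k_s / D, and let L_s be a (possibly infinite) Galois extension of F_s for D-almost all s. Then the algebraic part L_alg = L ∩ F^alg of the ultraproduct L = ∏_{s∈S} L_s / D is a Galois extension of F. -/

import Mathlib

set_option synthInstance.maxHeartbeats 1000000
set_option maxHeartbeats 1000000

/-- `K` (with surjection `π` from the product) is the ultraproduct of the family `R`
with respect to the ultrafilter `D`. -/
def IsUltraproduct {S : Type*} {R : S → Type*} [∀ s, CommRing (R s)]
    {K : Type*} [CommRing K] (D : Ultrafilter S) (π : (∀ s, R s) →+* K) : Prop :=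
  Function.Surjective π ∧ ∀ f g : ∀ s, R s, π f = π g ↔ {s | f s = g s} ∈ D

/-!
Write `F = K(t)` and `F*` for the image in `M` of `∏ k_s(t)`. The heart of the proof is that `F`
is relatively algebraically closed in `F*`: if `c = [u_s]` is algebraic over `F`, clearing
denominators in its minimal polynomial and applying the rational root theorem in each component
bounds the degrees of the numerators and denominators of the `u_s` uniformly, and polynomials of
bounded degree over `k_s` have their ultraproduct in `K[t]`, so `c ∈ F`.

Now let `x = [f_s]` be algebraic over `F` with minimal polynomial `p`. Lifting `p` to monic
polynomials `P_s`, almost every `f_s` is a root of `P_s`, so its minimal polynomial over `k_s(t)`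
has degree `d ≤ deg p` for almost all `s` (the same `d`), and splits into distinct linear factors
in the Galois extension `L_s`. The ultraproduct `∏ (X - y_i)` of these factorisations has its
coefficients in `F*` and algebraic over `F`, hence in `F`; it vanishes at `x`, so it equals `p`.
Thus `p` splits in `M` with distinct roots, all of them algebraic over `F`.
-/

open Polynomial Filter

namespace IsUltraproduct

variable {S : Type*} {R : S → Type*} [∀ s, CommRing (R s)] {K : Type*} [CommRing K]
  {D : Ultrafilter S} {π : (∀ s, R s) →+* K}

theorem map_eq_map_iff (h : IsUltraproduct D π) {f g : ∀ s, R s} :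
    π f = π g ↔ ∀ᶠ s in (D : Filter S), f s = g s :=
  h.2 f g

theorem map_eq_zero_iff (h : IsUltraproduct D π) {f : ∀ s, R s} :
    π f = 0 ↔ ∀ᶠ s in (D : Filter S), f s = 0 := by
  simpa using h.map_eq_map_iff (g := 0)

end IsUltraproduct

theorem Polynomial.natDegree_sum_range_monomial_le {R : Type*} [Semiring R] (N : ℕ) (c : ℕ → R) :
    (∑ j ∈ Finset.range (N + 1), monomial j (c j)).natDegree ≤ N :=
  natDegree_sum_le_of_forall_le _ _ fun _ hj =>
    (natDegree_monomial_le _).trans (Nat.lt_succ_iff.mp (Finset.mem_range.mp hj))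

section UltraPoly

variable {S : Type*} {D : Ultrafilter S} {R : S → Type*} [∀ s, CommRing (R s)]
  {K : Type*} [CommRing K] (π : (∀ s, R s) →+* K)

/-- The ultraproduct of the `q s`, meaningful when their degrees are eventually at most `N`. -/
noncomputable def ultraPoly (N : ℕ) (q : ∀ s, (R s)[X]) : K[X] :=
  ∑ j ∈ Finset.range (N + 1), monomial j (π fun s => (q s).coeff j)

theorem natDegree_ultraPoly_le (N : ℕ) (q : ∀ s, (R s)[X]) : (ultraPoly π N q).natDegree ≤ N :=
  natDegree_sum_range_monomial_le N _

theorem coeff_ultraPoly_of_le {N j : ℕ} (hj : j ≤ N) (q : ∀ s, (R s)[X]) :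
    (ultraPoly π N q).coeff j = π fun s => (q s).coeff j := by
  simp [ultraPoly, coeff_monomial, Nat.lt_succ_iff.mpr hj]

variable {π}

theorem coeff_ultraPoly (hπ : IsUltraproduct D π) {N : ℕ} {q : ∀ s, (R s)[X]}
    (hq : ∀ᶠ s in (D : Filter S), (q s).natDegree ≤ N) (j : ℕ) :
    (ultraPoly π N q).coeff j = π fun s => (q s).coeff j := by
  rcases le_or_gt j N with hj | hj
  · exact coeff_ultraPoly_of_le π hj q
  · rw [coeff_eq_zero_of_natDegree_lt ((natDegree_ultraPoly_le π N q).trans_lt hj), eq_comm,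
      hπ.map_eq_zero_iff]
    filter_upwards [hq] with s hs using coeff_eq_zero_of_natDegree_lt (hs.trans_lt hj)

theorem ultraPoly_eq_zero_iff (hπ : IsUltraproduct D π) {N : ℕ} {q : ∀ s, (R s)[X]}
    (hq : ∀ᶠ s in (D : Filter S), (q s).natDegree ≤ N) :
    ultraPoly π N q = 0 ↔ ∀ᶠ s in (D : Filter S), q s = 0 := by
  refine ⟨fun h => ?_, fun h => ?_⟩
  · have hcoeff : ∀ᶠ s in (D : Filter S), ∀ j ∈ Finset.range (N + 1), (q s).coeff j = 0 := by
      refine (eventually_all_finset _).2 fun j _ => hπ.map_eq_zero_iff.1 ?_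
      rw [← coeff_ultraPoly hπ hq, h, coeff_zero]
    filter_upwards [hcoeff, hq] with s hs hdeg
    rw [as_sum_range' (q s) (N + 1) (Nat.lt_succ_of_le hdeg)]
    exact Finset.sum_eq_zero fun j hj => by rw [hs j hj, monomial_zero_right]
  · ext j
    rw [coeff_ultraPoly hπ hq, coeff_zero, hπ.map_eq_zero_iff]
    filter_upwards [h] with s hs using by rw [hs, coeff_zero]

theorem exists_ultraPoly_eq (hπ : Function.Surjective π) {N : ℕ} {p : K[X]}
    (hp : p.natDegree ≤ N) :
    ∃ q : ∀ s, (R s)[X], (∀ s, (q s).natDegree ≤ N) ∧ ultraPoly π N q = p := by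
  choose σ hσ using fun j => hπ (p.coeff j)
  refine ⟨fun s => ∑ j ∈ Finset.range (N + 1), monomial j (σ j s),
    fun s => natDegree_sum_range_monomial_le N _, ?_⟩
  ext j
  rcases le_or_gt j N with hj | hj
  · simp [coeff_ultraPoly_of_le π hj, coeff_monomial, Nat.lt_succ_iff.mpr hj, hσ]
  · rw [coeff_eq_zero_of_natDegree_lt ((natDegree_ultraPoly_le π N _).trans_lt hj),
      coeff_eq_zero_of_natDegree_lt (hp.trans_lt hj)]

end UltraPoly

theorem exists_coeff_zero_ne_zero_eval₂_eq_zero {A F M : Type*} [CommRing A] [IsDomain A]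
    [Field F] [Algebra A F] [IsFractionRing A F] [Field M] [Algebra F M] {x : M}
    (hx : IsIntegral F x) (hx0 : x ≠ 0) :
    ∃ Γ : A[X], Γ.coeff 0 ≠ 0 ∧ Γ.eval₂ ((algebraMap F M).comp (algebraMap A F)) x = 0 := by
  obtain ⟨b, hb, hΓ⟩ := IsLocalization.integerNormalization_spec (nonZeroDivisors A) (minpoly F x)
  refine ⟨_, fun h => ?_, IsLocalization.integerNormalization_eval₂_eq_zero (nonZeroDivisors A) _ _
    (by rw [← aeval_def]; exact minpoly.aeval F x)⟩
  have h0 := congrArg (coeff · 0) hΓ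
  simp only [coeff_map, h, map_zero, Algebra.smul_def, Polynomial.algebraMap_apply,
    coeff_C_mul] at h0
  exact mul_ne_zero (IsFractionRing.to_map_ne_zero_of_mem_nonZeroDivisors hb)
    (minpoly.coeff_zero_ne_zero hx hx0) h0.symm

theorem natDegree_num_den_le_of_aeval_eq_zero {k : Type*} [Field k] {N : ℕ} {Q : (k[X])[X]}
    (hQ0 : Q.coeff 0 ≠ 0) (hQ : ∀ j, (Q.coeff j).natDegree ≤ N) {u : RatFunc k}
    (hu : aeval u Q = 0) :
    (IsFractionRing.num k[X] u).natDegree ≤ N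
      ∧ (IsFractionRing.den k[X] u : k[X]).natDegree ≤ N := by
  have hlc : Q.leadingCoeff ≠ 0 := leadingCoeff_ne_zero.2 fun h => hQ0 (by simp [h])
  exact ⟨(natDegree_le_of_dvd (num_dvd_of_is_root hu) hQ0).trans (hQ 0),
    (natDegree_le_of_dvd (den_dvd_of_is_root hu) hlc).trans (hQ _)⟩

theorem Polynomial.exists_injective_eq_prod_X_sub_C {L : Type*} [Field L] {q : L[X]} {d : ℕ}
    (hq : q.Monic) (hsplit : q.Splits) (hsep : q.Separable) (hd : q.natDegree = d) :
    ∃ r : Fin d → L, Function.Injective r ∧ q = ∏ i, (X - C (r i)) := by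
  classical
  have hnodup := nodup_roots hsep
  have hcard : Fintype.card q.roots.toFinset = d := by
    rw [Fintype.card_coe, Multiset.toFinset_card_of_nodup hnodup, ← hsplit.natDegree_eq_card_roots,
      hd]
  set e := Fintype.equivFinOfCardEq hcard
  refine ⟨fun i => e.symm i, Subtype.val_injective.comp e.symm.injective, ?_⟩
  calc q = ∏ a ∈ q.roots.toFinset, (X - C a) := by
        rw [Finset.prod_eq_multiset_prod, Multiset.toFinset_val, hnodup.dedup]
        exact hsplit.eq_prod_roots_of_monic hq
    _ = ∏ a : q.roots.toFinset, (X - C (a : L)) := (Finset.prod_coe_sort _ _).symm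
    _ = ∏ i, (X - C (e.symm i : L)) :=
        (e.symm.prod_comp fun a : q.roots.toFinset => X - C (a : L)).symm

theorem exists_injective_map_minpoly_eq_prod {F L : Type*} [Field F] [Field L] [Algebra F L]
    [IsGalois F L] (z : L) {d : ℕ} (hd : (minpoly F z).natDegree = d) :
    ∃ r : Fin d → L, Function.Injective r
      ∧ (minpoly F z).map (algebraMap F L) = ∏ i, (X - C (r i)) :=
  exists_injective_eq_prod_X_sub_C ((minpoly.monic (Algebra.IsSeparable.isIntegral F z)).map _)
    (Normal.splits inferInstance z) (Separable.map (Algebra.IsSeparable.isSeparable F z))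
    ((natDegree_map _).trans hd)

theorem eval_prod_X_sub_C_eq_zero_iff {L : Type*} [Field L] {ι : Type*} [Fintype ι]
    {r : ι → L} {a : L} : eval a (∏ i, (X - C (r i))) = 0 ↔ ∃ i, r i = a := by
  simp only [eval_prod, eval_sub, eval_X, eval_C, Finset.prod_eq_zero_iff, Finset.mem_univ,
    true_and, sub_eq_zero]
  exact exists_congr fun _ => eq_comm

theorem exists_eventually_roots {S : Type*} {D : Ultrafilter S} {F L : S → Type*}
    [∀ s, Field (F s)] [∀ s, Field (L s)] [∀ s, Algebra (F s) (L s)]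
    (hGal : ∀ᶠ s in (D : Filter S), IsGalois (F s) (L s)) {n : ℕ} {P : ∀ s, (F s)[X]}
    (hP0 : ∀ s, P s ≠ 0) (hPn : ∀ s, (P s).natDegree ≤ n) {f : ∀ s, L s}
    (hf : ∀ᶠ s in (D : Filter S), aeval (f s) (P s) = 0) :
    ∃ d ≤ n, ∃ r : ∀ s, Fin d → L s, ∀ᶠ s in (D : Filter S), Function.Injective (r s)
      ∧ (∀ i, aeval (r s i) (P s) = 0) ∧ f s ∈ Set.range (r s)
      ∧ (minpoly (F s) (f s)).map (algebraMap (F s) (L s)) = ∏ i, (X - C (r s i)) := by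
  have hdeg : ∀ᶠ s in (D : Filter S), ∃ e : Fin (n + 1), (minpoly (F s) (f s)).natDegree = e := by
    filter_upwards [hf] with s hs
    exact ⟨⟨_, Nat.lt_succ_of_le
      ((natDegree_le_of_dvd (minpoly.dvd _ _ hs) (hP0 s)).trans (hPn s))⟩, rfl⟩
  obtain ⟨e, he⟩ := Ultrafilter.eventually_exists_iff.1 hdeg
  have hroots : ∀ s, ∃ r : Fin e → L s, IsGalois (F s) (L s) → aeval (f s) (P s) = 0 →
      (minpoly (F s) (f s)).natDegree = e → Function.Injective r
        ∧ (∀ i, aeval (r i) (P s) = 0) ∧ f s ∈ Set.range r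
        ∧ (minpoly (F s) (f s)).map (algebraMap (F s) (L s)) = ∏ i, (X - C (r i)) := by
    intro s
    by_cases h : IsGalois (F s) (L s) ∧ (minpoly (F s) (f s)).natDegree = e
    · have := h.1
      obtain ⟨r, hr, hprod⟩ := exists_injective_map_minpoly_eq_prod (f s) h.2
      refine ⟨r, fun _ hfs _ => ⟨hr, fun i => ?_, ?_, hprod⟩⟩
      · obtain ⟨c, hc⟩ := minpoly.dvd _ _ hfs
        rw [hc, map_mul, ← eval_map_algebraMap, hprod,
          eval_prod_X_sub_C_eq_zero_iff.2 ⟨i, rfl⟩, zero_mul]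
      · rw [Set.mem_range, ← eval_prod_X_sub_C_eq_zero_iff, ← hprod, eval_map_algebraMap,
          minpoly.aeval]
    · exact ⟨fun _ => 0, fun h₁ _ h₂ => absurd ⟨h₁, h₂⟩ h⟩
  choose r hr using hroots
  exact ⟨e, Nat.lt_succ_iff.mp e.2, r, by
    filter_upwards [hGal, hf, he] with s h₁ h₂ h₃ using hr s h₁ h₂ h₃⟩

theorem coeff_prod_X_sub_C_pi {S : Type*} {R : S → Type*} [∀ s, CommRing (R s)] {M : Type*}
    [CommRing M] (π : (∀ s, R s) →+* M) {ι : Type*} (t : Finset ι) (r : ∀ s, ι → R s) (j : ℕ) :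
    (∏ i ∈ t, (X - C (π fun s => r s i))).coeff j
      = π fun s => (∏ i ∈ t, (X - C (r s i))).coeff j := by
  have hmap : ∏ i ∈ t, (X - C (π fun s => r s i)) = (∏ i ∈ t, (X - C fun s => r s i)).map π := by
    simp [Polynomial.map_prod]
  rw [hmap, coeff_map]
  congr 1
  funext s
  rw [← Pi.evalRingHom_apply R s (coeff _ j), ← coeff_map, Polynomial.map_prod]
  simp only [Polynomial.map_sub, map_X, map_C, Pi.evalRingHom_apply]

theorem isIntegral_coeff_prod_X_sub_C {R A : Type*} [CommRing R] [CommRing A] [Algebra R A]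
    {ι : Type*} (t : Finset ι) {y : ι → A} (hy : ∀ i, IsIntegral R (y i)) (j : ℕ) :
    IsIntegral R ((∏ i ∈ t, (X - C (y i))).coeff j) := by
  have hmap : ∏ i ∈ t, (X - C (y i))
      = (∏ i ∈ t, (X - C (⟨y i, hy i⟩ : integralClosure R A))).map
          (algebraMap (integralClosure R A) A) := by
    simp [Polynomial.map_prod]
  rw [hmap, coeff_map]
  exact ((∏ i ∈ t, (X - C (⟨y i, hy i⟩ : integralClosure R A))).coeff j).2

theorem isGalois_algebraicClosure_of_forall {F M : Type*} [Field F] [Field M] [Algebra F M]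
    (h : ∀ x : M, IsIntegral F x → ((minpoly F x).map (algebraMap F M)).Separable
      ∧ ((minpoly F x).map (algebraMap F M)).Splits) :
    IsGalois F (algebraicClosure F M) := by
  have hint (z : algebraicClosure F M) : IsIntegral F (z : M) := mem_algebraicClosure_iff'.1 z.2
  have hmin (z : algebraicClosure F M) : minpoly F z = minpoly F (z : M) :=
    (minpoly.algebraMap_eq (algebraMap (algebraicClosure F M) M).injective z).symm
  refine isGalois_iff.2 ⟨⟨fun z => ?_⟩, normal_iff.2 fun z => ⟨?_, ?_⟩⟩
  · rw [IsSeparable, hmin]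
    exact (separable_map _).1 (h _ (hint z)).1
  · exact (isIntegral_algebraMap_iff (algebraMap (algebraicClosure F M) M).injective).1 (hint z)
  · rw [hmin]
    refine IntermediateField.splits_of_splits (h _ (hint z)).2 fun x hx => ?_
    rw [mem_rootSet] at hx
    exact mem_algebraicClosure_iff.2 ⟨_, hx.1, hx.2⟩

section RatFunc

variable {S : Type*} {D : Ultrafilter S} {k : S → Type*} [∀ s, Field (k s)] {K : Type*} [Field K]
  {πK : (∀ s, k s) →+* K}
  {L : S → Type*} [∀ s, Field (L s)] [∀ s, Algebra (RatFunc (k s)) (L s)]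
  {M : Type*} [Field M] [Algebra (RatFunc K) M] (πL : (∀ s, L s) →+* M)

noncomputable def ratFuncMap : (∀ s, RatFunc (k s)) →+* M :=
  πL.comp (RingHom.pi fun s => (algebraMap (RatFunc (k s)) (L s)).comp (Pi.evalRingHom _ s))

theorem ratFuncMap_apply (u : ∀ s, RatFunc (k s)) :
    ratFuncMap πL u = πL fun s => algebraMap (RatFunc (k s)) (L s) (u s) :=
  rfl

variable {πL}

theorem ratFuncMap_eq_iff (hM : IsUltraproduct D πL) {u v : ∀ s, RatFunc (k s)} :
    ratFuncMap πL u = ratFuncMap πL v ↔ ∀ᶠ s in (D : Filter S), u s = v s := by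
  simp only [ratFuncMap_apply, hM.map_eq_map_iff, (RingHom.injective _).eq_iff]

theorem ratFuncMap_eq_zero_iff (hM : IsUltraproduct D πL) {u : ∀ s, RatFunc (k s)} :
    ratFuncMap πL u = 0 ↔ ∀ᶠ s in (D : Filter S), u s = 0 := by
  simpa using ratFuncMap_eq_iff hM (u := u) (v := 0)

variable (hM : IsUltraproduct D πL)
  (hC : ∀ f : ∀ s, k s,
    algebraMap (RatFunc K) M (RatFunc.C (πK f))
      = ratFuncMap πL fun s => (RatFunc.C (f s) : RatFunc (k s)))
  (hX : algebraMap (RatFunc K) M RatFunc.X = ratFuncMap πL fun s => (RatFunc.X : RatFunc (k s)))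
include hM hC hX

theorem algebraMap_ultraPoly {N : ℕ} {q : ∀ s, (k s)[X]}
    (hq : ∀ᶠ s in (D : Filter S), (q s).natDegree ≤ N) :
    algebraMap (RatFunc K) M (algebraMap K[X] (RatFunc K) (ultraPoly πK N q))
      = ratFuncMap πL fun s => algebraMap (k s)[X] (RatFunc (k s)) (q s) := by
  have hsum : ∀ᶠ s in (D : Filter S), algebraMap (k s)[X] (RatFunc (k s)) (q s)
      = ∑ j ∈ Finset.range (N + 1), RatFunc.C ((q s).coeff j) * RatFunc.X ^ j := by
    filter_upwards [hq] with s hs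
    conv_lhs => rw [as_sum_range' (q s) (N + 1) (Nat.lt_succ_of_le hs)]
    simp [← C_mul_X_pow_eq_monomial, RatFunc.algebraMap_C, RatFunc.algebraMap_X]
  rw [(ratFuncMap_eq_iff hM).2 hsum]
  simp only [ultraPoly, ← C_mul_X_pow_eq_monomial, map_sum, map_mul, map_pow,
    RatFunc.algebraMap_C, RatFunc.algebraMap_X, hC, hX]
  simp only [← map_pow, ← map_mul, ← map_sum]
  congr 1
  funext s
  simp [Finset.sum_apply]

theorem ratFuncMap_div_ultraPoly {N : ℕ} {a b : ∀ s, (k s)[X]}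
    (ha : ∀ᶠ s in (D : Filter S), (a s).natDegree ≤ N)
    (hb : ∀ᶠ s in (D : Filter S), (b s).natDegree ≤ N) (hb0 : ∀ᶠ s in (D : Filter S), b s ≠ 0) :
    (ratFuncMap πL fun s => algebraMap (k s)[X] (RatFunc (k s)) (a s)
        / algebraMap (k s)[X] (RatFunc (k s)) (b s))
      = algebraMap (RatFunc K) M (algebraMap K[X] (RatFunc K) (ultraPoly πK N a)
        / algebraMap K[X] (RatFunc K) (ultraPoly πK N b)) := by
  have hb0' : ∀ᶠ s in (D : Filter S), algebraMap (k s)[X] (RatFunc (k s)) (b s) ≠ 0 := by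
    filter_upwards [hb0] with s hs
    exact (map_ne_zero_iff _ (RatFunc.algebraMap_injective (k s))).2 hs
  have hB : (ratFuncMap πL fun s => algebraMap (k s)[X] (RatFunc (k s)) (b s)) ≠ 0 :=
    fun h => (ratFuncMap_eq_zero_iff hM).1 h |>.and hb0' |>.exists.elim fun _ h => h.2 h.1
  rw [map_div₀, algebraMap_ultraPoly hM hC hX ha, algebraMap_ultraPoly hM hC hX hb,
    eq_div_iff hB, ← map_mul, ratFuncMap_eq_iff hM]
  filter_upwards [hb0'] with s hs using div_mul_cancel₀ _ hs

theorem exists_ratFuncMap_eq (hK : IsUltraproduct D πK) (r : RatFunc K) :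
    ∃ u : ∀ s, RatFunc (k s), ratFuncMap πL u = algebraMap (RatFunc K) M r := by
  obtain ⟨a, ha, hna⟩ := exists_ultraPoly_eq hK.1 (le_max_left r.num.natDegree r.denom.natDegree)
  obtain ⟨b, hb, hnb⟩ := exists_ultraPoly_eq hK.1 (le_max_right r.num.natDegree r.denom.natDegree)
  have hb0 : ∀ᶠ s in (D : Filter S), b s ≠ 0 := by
    refine Ultrafilter.eventually_not.2 fun h => r.denom_ne_zero ?_
    rw [← hnb, ultraPoly_eq_zero_iff hK (Eventually.of_forall hb)]
    exact h
  refine ⟨_, ratFuncMap_div_ultraPoly hM hC hX (Eventually.of_forall ha)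
    (Eventually.of_forall hb) hb0 |>.trans ?_⟩
  rw [hna, hnb, RatFunc.num_div_denom]

theorem exists_eventually_natDegree_num_den_le (hK : IsUltraproduct D πK)
    {u : ∀ s, RatFunc (k s)} (hu : IsIntegral (RatFunc K) (ratFuncMap πL u))
    (hu0 : ratFuncMap πL u ≠ 0) :
    ∃ N, ∀ᶠ s in (D : Filter S), (IsFractionRing.num (k s)[X] (u s)).natDegree ≤ N
      ∧ (IsFractionRing.den (k s)[X] (u s) : (k s)[X]).natDegree ≤ N := by
  obtain ⟨Γ, hΓ0, hΓ⟩ := exists_coeff_zero_ne_zero_eval₂_eq_zero (A := K[X]) hu hu0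
  set N := Γ.support.sup fun j => (Γ.coeff j).natDegree
  have hN : ∀ j, (Γ.coeff j).natDegree ≤ N := fun j => by
    by_cases hj : Γ.coeff j = 0
    · simp [hj]
    · exact Finset.le_sup (f := fun j => (Γ.coeff j).natDegree) (mem_support_iff.2 hj)
  choose g hg hgΓ using fun j => exists_ultraPoly_eq hK.1 (hN j)
  set Γs : ∀ s, ((k s)[X])[X] := fun s =>
    ∑ j ∈ Finset.range (Γ.natDegree + 1), C (g j s) * X ^ j
  have hΓs : ∀ s j, (Γs s).coeff j = if j < Γ.natDegree + 1 then g j s else 0 := by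
    simp [Γs]
  have hroot : ∀ᶠ s in (D : Filter S), aeval (u s) (Γs s) = 0 := by
    rw [← ratFuncMap_eq_zero_iff hM, ← hΓ, eval₂_eq_sum_range]
    simp only [Γs, map_sum, map_mul, map_pow, aeval_C, aeval_X, RingHom.comp_apply, ← hgΓ,
      algebraMap_ultraPoly hM hC hX (Eventually.of_forall (hg _))]
    simp only [← map_pow, ← map_mul, ← map_sum]
    congr 1
    funext s
    simp [Finset.sum_apply]
  have hcoeff0 : ∀ᶠ s in (D : Filter S), g 0 s ≠ 0 := by
    refine Ultrafilter.eventually_not.2 fun h => hΓ0 ?_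
    rw [← hgΓ, ultraPoly_eq_zero_iff hK (Eventually.of_forall (hg 0))]
    exact h
  refine ⟨N, ?_⟩
  filter_upwards [hroot, hcoeff0] with s hs hs0
  refine natDegree_num_den_le_of_aeval_eq_zero (by simpa [hΓs] using hs0) (fun j => ?_) hs
  rw [hΓs]
  split_ifs
  exacts [hg j s, by simp]

theorem exists_algebraMap_eq_of_isIntegral (hK : IsUltraproduct D πK)
    {u : ∀ s, RatFunc (k s)} (hu : IsIntegral (RatFunc K) (ratFuncMap πL u)) :
    ∃ r, algebraMap (RatFunc K) M r = ratFuncMap πL u := by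
  by_cases hu0 : ratFuncMap πL u = 0
  · exact ⟨0, by rw [map_zero, hu0]⟩
  obtain ⟨N, hN⟩ := exists_eventually_natDegree_num_den_le hM hC hX hK hu hu0
  refine ⟨_, (ratFuncMap_div_ultraPoly hM hC hX (hN.mono fun _ h => h.1) (hN.mono fun _ h => h.2)
    (Eventually.of_forall fun s => nonZeroDivisors.coe_ne_zero _)).symm.trans ?_⟩
  congr 1
  funext s
  exact IsFractionRing.mk'_num_den' _ _

theorem exists_monic_family_aeval_eq (hK : IsUltraproduct D πK) {p : (RatFunc K)[X]}
    (hp : p.Monic) :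
    ∃ P : ∀ s, (RatFunc (k s))[X], (∀ s, (P s).Monic ∧ (P s).natDegree = p.natDegree) ∧
      ∀ w : ∀ s, L s, aeval (πL w) p = πL fun s => aeval (w s) (P s) := by
  have hlifts : p.map (algebraMap (RatFunc K) M) ∈ lifts (ratFuncMap πL) :=
    (lifts_iff_coeff_lifts _).2 fun j => by
      rw [coeff_map]
      exact exists_ratFuncMap_eq hM hC hX hK _
  obtain ⟨Q, hQ, hQdeg, hQmonic⟩ := lifts_and_natDegree_eq_and_monic hlifts (hp.map _)
  refine ⟨fun s => Q.map (Pi.evalRingHom _ s), fun s => ⟨hQmonic.map _, ?_⟩, fun w => ?_⟩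
  · rw [hQmonic.natDegree_map, hQdeg, hp.natDegree_map]
  · rw [aeval_def, ← eval_map, ← hQ, eval_map, ratFuncMap, ← hom_eval₂]
    congr 1
    funext s
    change Pi.evalRingHom L s _ = _
    rw [hom_eval₂, aeval_def, eval₂_map]
    rfl

theorem prod_X_sub_C_mem_lifts (hK : IsUltraproduct D πK) {d : ℕ} {r : ∀ s, Fin d → L s}
    {q : ∀ s, (RatFunc (k s))[X]}
    (hq : ∀ᶠ s in (D : Filter S), (q s).map (algebraMap _ (L s)) = ∏ i, (X - C (r s i)))
    (hr : ∀ i, IsIntegral (RatFunc K) (πL fun s => r s i)) :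
    ∏ i, (X - C (πL fun s => r s i)) ∈ lifts (algebraMap (RatFunc K) M) := by
  have hcoeff (j : ℕ) :
      (∏ i, (X - C (πL fun s => r s i))).coeff j = ratFuncMap πL fun s => (q s).coeff j := by
    rw [coeff_prod_X_sub_C_pi, ratFuncMap_apply, hM.map_eq_map_iff]
    filter_upwards [hq] with s hs
    rw [← hs, coeff_map]
  refine (lifts_iff_coeff_lifts _).2 fun j => ?_
  rw [hcoeff]
  refine exists_algebraMap_eq_of_isIntegral hM hC hX hK ?_
  rw [← hcoeff]
  exact isIntegral_coeff_prod_X_sub_C _ hr j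

theorem exists_injective_map_minpoly_eq_prod_of_isIntegral (hK : IsUltraproduct D πK)
    (hGal : ∀ᶠ s in (D : Filter S), IsGalois (RatFunc (k s)) (L s)) {x : M}
    (hx : IsIntegral (RatFunc K) x) :
    ∃ d, ∃ y : Fin d → M, Function.Injective y
      ∧ (minpoly (RatFunc K) x).map (algebraMap (RatFunc K) M) = ∏ i, (X - C (y i)) := by
  set p := minpoly (RatFunc K) x
  obtain ⟨P, hP, hPeval⟩ := exists_monic_family_aeval_eq hM hC hX hK (minpoly.monic hx)
  obtain ⟨f, rfl⟩ := hM.1 x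
  have hroot : ∀ᶠ s in (D : Filter S), aeval (f s) (P s) = 0 := by
    rw [← hM.map_eq_zero_iff, ← hPeval, minpoly.aeval]
  obtain ⟨d, hdn, r, hr⟩ :=
    exists_eventually_roots hGal (fun s => (hP s).1.ne_zero) (fun s => (hP s).2.le) hroot
  set y : Fin d → M := fun i => πL fun s => r s i
  have hy_inj : Function.Injective y := fun i j hij => by
    obtain ⟨s, hs, hrs⟩ := ((hM.map_eq_map_iff.1 hij).and hr).exists
    exact hrs.1 hs
  have hy_int (i : Fin d) : IsIntegral (RatFunc K) (y i) := by
    refine ⟨p, minpoly.monic hx, ?_⟩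
    rw [← aeval_def, hPeval, hM.map_eq_zero_iff]
    filter_upwards [hr] with s hs using hs.2.1 i
  obtain ⟨i₀, hi₀⟩ : ∃ i, ∀ᶠ s in (D : Filter S), r s i = f s :=
    Ultrafilter.eventually_exists_iff.1 (hr.mono fun s hs => hs.2.2.1)
  have hm_lifts : ∏ i, (X - C (y i)) ∈ lifts (algebraMap (RatFunc K) M) :=
    prod_X_sub_C_mem_lifts hM hC hX hK (hr.mono fun _ hs => hs.2.2.2) hy_int
  obtain ⟨μ, hμ, hμdeg, hμmonic⟩ :=
    lifts_and_natDegree_eq_and_monic hm_lifts (monic_prod_of_monic _ _ fun i _ => monic_X_sub_C _)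
  have hμx : aeval (πL f) μ = 0 := by
    rw [← eval_map_algebraMap, hμ, eval_prod_X_sub_C_eq_zero_iff]
    exact ⟨i₀, hM.map_eq_map_iff.2 hi₀⟩
  have hμp : μ = p := by
    refine eq_of_monic_of_dvd_of_natDegree_le (minpoly.monic hx) hμmonic (minpoly.dvd _ _ hμx) ?_
    rw [hμdeg, natDegree_finsetProd_X_sub_C_eq_card, Finset.card_univ, Fintype.card_fin]
    exact hdn
  exact ⟨d, y, hy_inj, by rw [← hμp, hμ]⟩

end RatFunc

theorem stmt_14_general {S : Type*} (D : Ultrafilter S)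
    (k : S → Type*) [∀ s, Field (k s)] (K : Type*) [Field K]
    (πK : (∀ s, k s) →+* K) (hK : IsUltraproduct D πK)
    (L : S → Type*) [∀ s, Field (L s)] [∀ s, Algebra (RatFunc (k s)) (L s)]
    (hGal : {s | IsGalois (RatFunc (k s)) (L s)} ∈ D)
    (M : Type*) [Field M] [Algebra (RatFunc K) M]
    (πL : (∀ s, L s) →+* M) (hM : IsUltraproduct D πL)
    (hC : ∀ f : ∀ s, k s,
      algebraMap (RatFunc K) M (RatFunc.C (πK f))
        = πL fun s => algebraMap (RatFunc (k s)) (L s) (RatFunc.C (f s)))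
    (hX : algebraMap (RatFunc K) M RatFunc.X
        = πL fun s => algebraMap (RatFunc (k s)) (L s) RatFunc.X) :
    IsGalois (RatFunc K) ↥(algebraicClosure (RatFunc K) M) := by
  refine isGalois_algebraicClosure_of_forall fun x hx => ?_
  obtain ⟨d, y, hy, hmap⟩ := exists_injective_map_minpoly_eq_prod_of_isIntegral hM hC hX hK hGal hx
  rw [hmap]
  exact ⟨separable_prod_X_sub_C_iff'.2 fun i _ j _ h => hy h,
    Splits.prod fun i _ => Splits.X_sub_C _⟩

/-- If `L s` is a Galois extension of `k_s(t)` for `D`-almost all `s`, then the algebraic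
part of the ultraproduct `M` (the maximal algebraic subextension `algebraicClosure F M`
of `M` over `F = K(t)`) is a Galois extension of `F`. -/
theorem stmt_14 {S : Type*} [Infinite S] (D : Ultrafilter S) (hD : ∀ s : S, D ≠ pure s)
    (k : S → Type*) [∀ s, Field (k s)] (K : Type*) [Field K]
    (πK : (∀ s, k s) →+* K) (hK : IsUltraproduct D πK)
    (L : S → Type*) [∀ s, Field (L s)] [∀ s, Algebra (RatFunc (k s)) (L s)]
    (hGal : {s | IsGalois (RatFunc (k s)) (L s)} ∈ D)
    (M : Type*) [Field M] [Algebra (RatFunc K) M]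
    (πL : (∀ s, L s) →+* M) (hM : IsUltraproduct D πL)
    (hC : ∀ f : ∀ s, k s,
      algebraMap (RatFunc K) M (RatFunc.C (πK f))
        = πL fun s => algebraMap (RatFunc (k s)) (L s) (RatFunc.C (f s)))
    (hX : algebraMap (RatFunc K) M RatFunc.X
        = πL fun s => algebraMap (RatFunc (k s)) (L s) RatFunc.X) :
    IsGalois (RatFunc K) ↥(algebraicClosure (RatFunc K) M) :=
  stmt_14_general D k K πK hK L hGal M πL hM hC hX
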